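/- Let n be a natural number and let T be a computable tree over Fin n. If the set [T] of infinite paths of T is finite, then every infinite path of T is a computable function ℕ → Fin n. -/

import Mathlib

/-- The initial segment (f 0, …, f (k-1)) of an infinite sequence f. -/
def initSeg {n : ℕ} (f : ℕ → Fin n) (k : ℕ) : List (Fin n) :=
  List.ofFn (fun i : Fin k => f i)

/-- A tree over `Fin n`: a set of finite strings closed under taking prefixes. -/
def IsTree {n : ℕ} (T : Set (List (Fin n))) : Prop :=
  ∀ σ ∈ T, ∀ τ, τ <+: σ → τ ∈ T

/-- `f` is an infinite path of `T`: every initial segment of `f` belongs to `T`. -/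
def IsPath {n : ℕ} (T : Set (List (Fin n))) (f : ℕ → Fin n) : Prop :=
  ∀ k : ℕ, initSeg f k ∈ T

/-!
A path `f` in a tree with finitely many paths is isolated: some initial segment `σ` of `f` is
extended by no other path. By compactness of `ℕ → Fin n` (König's lemma), for every `m` some
finite level then already decides `f m`: all extensions of `σ` by `k` letters that lie in `T`
carry the same letter at position `m`. Since `T` is decidable and each level is finite, such a
level together with its letter can be found by unbounded search, so `f` is computable.
-/

theorem List.foldl_take_eq_nat_rec {β σ : Type*} (l : List β) (init : σ) (step : σ → β → σ)
    (k : ℕ) :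
    (l.take k).foldl step init =
      Nat.rec (motive := fun _ => σ) init (fun i acc => l[i]?.elim acc (step acc)) k := by
  induction k with
  | zero => simp
  | succ k ih => cases h : l[k]? <;> simp [List.take_add_one, h, ih]

section Computability

open Encodable

variable {α β σ : Type*} [Primcodable α] [Primcodable β] [Primcodable σ]

theorem Computable.list_foldl {f : α → List β} {g : α → σ} {h : α → σ × β → σ}
    (hf : Computable f) (hg : Computable g) (hh : Computable₂ h) :
    Computable fun a => (f a).foldl (fun s b => h a (s, b)) (g a) := by
  have hrec := Computable.nat_rec (Computable.list_length.comp hf) hg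
    (Computable.option_casesOn
      (Computable.list_getElem?.comp (hf.comp Computable.fst)
        (Computable.fst.comp Computable.snd))
      (Computable.snd.comp Computable.snd)
      (hh.comp (Computable.fst.comp Computable.fst)
        (Computable.pair (Computable.snd.comp (Computable.snd.comp Computable.fst))
          Computable.snd)).to₂).to₂
  refine hrec.of_eq fun a => ?_
  have hfold := List.foldl_take_eq_nat_rec (f a) (g a) (fun s b => h a (s, b)) (f a).length
  rw [List.take_length] at hfold
  rw [hfold]
  congr
  funext i acc
  cases (f a)[i]? <;> rfl

theorem Computable.list_all {f : α → List β} {p : α → β → Bool} (hf : Computable f)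
    (hp : Computable₂ p) : Computable fun a => (f a).all (p a) := by
  refine (Computable.list_foldl hf (Computable.const true)
    ((Primrec.and.to_comp.comp (Computable.fst.comp Computable.snd)
      (hp.comp Computable.fst (Computable.snd.comp Computable.snd))).to₂)).of_eq fun a => ?_
  suffices ∀ (l : List β) b, l.foldl (fun s x => s && p a x) b = (b && l.all (p a)) from
    (this (f a) true).trans (Bool.true_and _)
  intro l
  induction l with
  | nil => simp
  | cons x l ih => intro b; simp [ih, Bool.and_assoc]

theorem Computable.of_witnessed_graph {f : α → σ} {R : α → β → σ → Prop}
    (hR : ComputablePred fun q : α × β × σ => R q.1 q.2.1 q.2.2)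
    (hex : ∀ a, ∃ b, R a b (f a)) (hR_graph : ∀ a b c, R a b c → c = f a) :
    Computable f := by
  obtain ⟨χ, hχ, hRχ⟩ := ComputablePred.computable_iff.1 hR
  have hχ_iff : ∀ a p, χ (a, p) = true ↔ R a p.1 p.2 := fun a p =>
    (iff_of_eq (congrFun hRχ (a, p))).symm
  let g : α → ℕ → Option σ := fun a i =>
    (decode (α := β × σ) i).bind fun p => bif χ (a, p) then some p.2 else none
  have hg : Computable₂ g :=
    Computable.option_bind (Computable.decode.comp Computable.snd)
      (Computable.cond (hχ.comp (Computable.pair (Computable.fst.comp Computable.fst)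
          Computable.snd))
        (Computable.option_some.comp (Computable.snd.comp Computable.snd))
        (Computable.const none)).to₂
  have hg_graph : ∀ a i c, c ∈ g a i → c = f a := by
    intro a i c hc
    simp only [g, Option.mem_def, Option.bind_eq_some_iff] at hc
    obtain ⟨p, -, hp⟩ := hc
    cases h : χ (a, p)
    · simp [h] at hp
    · simp only [h, cond_true, Option.some.injEq] at hp
      exact hp ▸ hR_graph a p.1 p.2 ((hχ_iff a p).1 h)
  refine (Partrec.rfindOpt hg).of_eq_tot fun a => ?_
  have hdom : (Nat.rfindOpt (g a)).Dom := by
    obtain ⟨b, hb⟩ := hex a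
    refine Nat.rfindOpt_dom.2 ⟨encode (b, f a), f a, ?_⟩
    simp only [g, encodek, Option.bind_some, (hχ_iff a (b, f a)).2 hb, cond_true]
    rfl
  obtain ⟨i, hi⟩ := Nat.rfindOpt_spec (Part.get_mem hdom)
  exact hg_graph a i _ hi ▸ Part.get_mem hdom

end Computability

open Filter

section Trees

variable {n : ℕ}

theorem initSeg_length (f : ℕ → Fin n) (k : ℕ) : (initSeg f k).length = k := by
  simp [initSeg]

theorem initSeg_getElem? (f : ℕ → Fin n) {k m : ℕ} (h : m < k) :
    (initSeg f k)[m]? = some (f m) := by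
  simp [initSeg, h]

theorem initSeg_add (f : ℕ → Fin n) (k l : ℕ) :
    initSeg f (k + l) = initSeg f k ++ initSeg (fun i => f (k + i)) l := by
  simp [initSeg, List.ofFn_add]

theorem initSeg_prefix_initSeg (f : ℕ → Fin n) {k l : ℕ} (h : k ≤ l) :
    initSeg f k <+: initSeg f l := by
  obtain ⟨j, rfl⟩ := Nat.exists_eq_add_of_le h
  exact ⟨_, (initSeg_add f k j).symm⟩

theorem initSeg_eq_initSeg_iff {f g : ℕ → Fin n} {k : ℕ} :
    initSeg f k = initSeg g k ↔ ∀ m < k, f m = g m := by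
  simp [initSeg, funext_iff, Fin.forall_iff]

theorem initSeg_getD (τ : List (Fin n)) (d : Fin n) {k : ℕ} (h : k ≤ τ.length) :
    initSeg (fun i => τ.getD i d) k = τ.take k := by
  apply List.ext_getElem?
  intro i
  by_cases hi : i < k
  · simp [initSeg_getElem? _ hi, hi, List.getElem?_eq_getElem (show i < τ.length by omega)]
  · simp [initSeg_length, hi]

theorem continuous_initSeg (k : ℕ) : Continuous fun f : ℕ → Fin n => initSeg f k :=
  continuous_of_discreteTopology.comp (continuous_pi fun i : Fin k => continuous_apply (i : ℕ))

theorem IsTree.initSeg_mem_of_le {T : Set (List (Fin n))} (hT : IsTree T) {f : ℕ → Fin n}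
    {k l : ℕ} (hl : initSeg f l ∈ T) (hkl : k ≤ l) : initSeg f k ∈ T :=
  hT _ hl _ (initSeg_prefix_initSeg f hkl)

theorem IsTree.exists_forall_initSeg_mem_imp_mem {T : Set (List (Fin n))} (hT : IsTree T)
    {U : Set (ℕ → Fin n)} (hU : IsOpen U) (hpath : ∀ g, IsPath T g → g ∈ U) :
    ∃ L, ∀ g, initSeg g L ∈ T → g ∈ U := by
  let V : ℕ → Set (ℕ → Fin n) := fun L => {g | initSeg g L ∉ T} ∪ U
  have hV_open : ∀ L, IsOpen (V L) := fun L =>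
    ((isOpen_discrete {τ | τ ∉ T}).preimage (continuous_initSeg L)).union hU
  have hV_mono : Monotone V := fun k l hkl g hg =>
    hg.imp_left fun hk hl => hk (hT.initSeg_mem_of_le hl hkl)
  have hV_cover : Set.univ ⊆ ⋃ L, V L := by
    intro g _
    by_contra hg
    simp only [Set.mem_iUnion, not_exists, V, Set.mem_union, Set.mem_ofPred_eq, not_or,
      not_not] at hg
    exact (hg 0).2 (hpath g fun L => (hg L).1)
  obtain ⟨L, hL⟩ := isCompact_univ.elim_directed_cover V hV_open hV_cover hV_mono.directed_le
  exact ⟨L, fun g hg => (hL (Set.mem_univ g)).resolve_left (not_not_intro hg)⟩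

theorem Set.Finite.exists_initSeg_eq_imp_eq {S : Set (ℕ → Fin n)} (hS : S.Finite)
    (f : ℕ → Fin n) : ∃ N, ∀ g ∈ S, initSeg g N = initSeg f N → g = f := by
  have hsep : ∀ g : ℕ → Fin n, ∀ᶠ N in atTop, initSeg g N = initSeg f N → g = f := by
    intro g
    by_cases hgf : g = f
    · exact .of_forall fun _ _ => hgf
    obtain ⟨m, hm⟩ := Function.ne_iff.1 hgf
    filter_upwards [eventually_gt_atTop m] with N hN heq
    exact absurd (initSeg_eq_initSeg_iff.1 heq m hN) hm
  exact ((eventually_all_finite hS).2 fun g _ => hsep g).exists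

def ExtensionsForce (T : Set (List (Fin n))) (σ : List (Fin n)) (m k : ℕ) (a : Fin n) : Prop :=
  ∀ ρ : List (Fin n), ρ.length = k → σ ++ ρ ∈ T → (σ ++ ρ)[m]? = some a

theorem IsTree.exists_extensionsForce {T : Set (List (Fin n))} (hT : IsTree T)
    {σ : List (Fin n)} {m : ℕ} {a : Fin n}
    (h : ∀ g, IsPath T g → initSeg g σ.length = σ → g m = a) :
    ∃ k, ExtensionsForce T σ m k a := by
  let U : Set (ℕ → Fin n) := {g | initSeg g σ.length ≠ σ} ∪ {g | g m = a}
  have hU : IsOpen U :=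
    ((isOpen_discrete {τ | τ ≠ σ}).preimage (continuous_initSeg _)).union
      ((isOpen_discrete {a}).preimage (continuous_apply m : Continuous fun g : ℕ → Fin n => g m))
  obtain ⟨L, hL⟩ := hT.exists_forall_initSeg_mem_imp_mem hU fun g hg =>
    or_iff_not_imp_left.2 fun hgσ => h g hg (not_not.1 hgσ)
  refine ⟨L + m + 1, fun ρ hρ hmem => ?_⟩
  set τ := σ ++ ρ
  have hτ : τ.length = σ.length + (L + m + 1) := by simp [τ, hρ]
  let g : ℕ → Fin n := fun i => τ.getD i a
  have hgτ : initSeg g τ.length = τ := by rw [initSeg_getD τ a le_rfl, List.take_length]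
  have hgσ : initSeg g σ.length = σ := by
    rw [initSeg_getD τ a (by omega), List.take_left]
  have hgU : g ∈ U := hL g (hT.initSeg_mem_of_le (hgτ ▸ hmem) (by omega))
  have hgm : g m = a := hgU.resolve_left (not_not_intro hgσ)
  rw [← hgτ, initSeg_getElem? g (by omega), hgm]

theorem IsPath.eq_of_extensionsForce {T : Set (List (Fin n))} {f : ℕ → Fin n}
    (hf : IsPath T f) {N m k : ℕ} {a : Fin n}
    (h : ExtensionsForce T (initSeg f N) m k a) : f m = a := by
  have hfa := h (initSeg (fun i => f (N + i)) k) (initSeg_length _ _)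
    (initSeg_add f N k ▸ hf (N + k))
  rw [← initSeg_add] at hfa
  by_cases hm : m < N + k
  · exact Option.some.inj ((initSeg_getElem? f hm).symm.trans hfa)
  · simp [initSeg_length, hm] at hfa

def stringsOfLength (n : ℕ) : ℕ → List (List (Fin n))
  | 0 => [[]]
  | k + 1 => (List.finRange n).flatMap fun a => (stringsOfLength n k).map (a :: ·)

theorem mem_stringsOfLength {k : ℕ} {τ : List (Fin n)} :
    τ ∈ stringsOfLength n k ↔ τ.length = k := by
  induction k generalizing τ with
  | zero => simp [stringsOfLength]
  | succ k ih => cases τ <;> simp [stringsOfLength, ih]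

theorem primrec_stringsOfLength : Primrec (stringsOfLength n) := by
  have hstep : Primrec₂ fun (_ : ℕ) (ss : List (List (Fin n))) =>
      (List.finRange n).flatMap fun a => ss.map (a :: ·) :=
    (Primrec.list_flatMap (Primrec.const _)
      (Primrec.list_map (Primrec.snd.comp Primrec.fst)
        (Primrec.list_cons.comp (Primrec.snd.comp Primrec.fst) Primrec.snd).to₂).to₂).to₂
  refine (Primrec.nat_rec₁ [[]] hstep).of_eq fun k => ?_
  induction k with
  | zero => rfl
  | succ k ih => simp only [stringsOfLength, ← ih]

theorem ComputablePred.extensionsForce {T : Set (List (Fin n))}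
    (hT : ComputablePred (· ∈ T)) (σ : List (Fin n)) :
    ComputablePred fun q : ℕ × ℕ × Fin n => ExtensionsForce T σ q.1 q.2.1 q.2.2 := by
  obtain ⟨χ, hχ, hTχ⟩ := ComputablePred.computable_iff.1 hT
  have hmem : ∀ τ, τ ∈ T ↔ χ τ = true := fun τ => iff_of_eq (congrFun hTχ τ)
  refine ComputablePred.computable_iff.2 ⟨fun q => (stringsOfLength n q.2.1).all fun ρ =>
    !χ (σ ++ ρ) || decide ((σ ++ ρ)[q.1]? = some q.2.2), ?_, ?_⟩
  · refine Computable.list_all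
      (primrec_stringsOfLength.to_comp.comp (Computable.fst.comp Computable.snd)) ?_
    have hσρ : Computable fun p : (ℕ × ℕ × Fin n) × List (Fin n) => σ ++ p.2 :=
      Computable.list_append.comp (Computable.const σ) Computable.snd
    exact (Primrec.or.to_comp.comp (Primrec.not.to_comp.comp (hχ.comp hσρ))
      (Primrec.eq.decide.to_comp.comp (Computable.list_getElem?.comp hσρ
        (Computable.fst.comp Computable.fst)) (Computable.option_some.comp
          (Computable.snd.comp (Computable.snd.comp Computable.fst))))).to₂
  · funext q
    simp [ExtensionsForce, List.all_eq_true, mem_stringsOfLength, hmem, or_iff_not_imp_left]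

end Trees

/-- If a computable tree has only finitely many infinite paths, then every
infinite path of it is a computable function. -/
theorem finite_paths_all_computable {n : ℕ} (T : Set (List (Fin n))) (hT : IsTree T)
    (hTcomp : ComputablePred (· ∈ T))
    (hfin : {f : ℕ → Fin n | IsPath T f}.Finite) :
    ∀ f : ℕ → Fin n, IsPath T f → Computable f := by
  intro f hf
  obtain ⟨N, hiso⟩ := hfin.exists_initSeg_eq_imp_eq f
  refine Computable.of_witnessed_graph (hTcomp.extensionsForce (initSeg f N))
    (fun m => hT.exists_extensionsForce fun g hg hgf => ?_)
    (fun m k a h => (hf.eq_of_extensionsForce h).symm)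
  rw [initSeg_length] at hgf
  exact congrFun (hiso g hg hgf) m
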